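/- arXiv:2206.03418 — 3 statements merged into one kernel-verified Lean document; each statement's English description precedes it below -/
import Mathlib

section
/- Let v_r(t) be the SV velocity: v_r(t) = v_r + a_max·t for t ∈ [0, ρ] and v_r(t) = max(0, v_r + a_max·ρ − a_min·(t − ρ)) for t > ρ; let v_f(t) = max(0, v_f − a_max_brake·t) be the POV velocity. Assume a_max ≥ 0, 0 < a_min < a_max_brake, v_r ≥ 0, v_f ≥ 0, ρ ≥ 0. Then the relative velocity v_r(t) − v_f(t) changes sign at most once on [0, ∞), and if it changes sign it changes from negative to positive. -/
/-- The relative velocity of the SV w.r.t. the POV changes sign at most once on [0, ∞),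
and if it changes sign it changes from negative to positive: there exists t₀ ≥ 0 with
v_r(t) − v_f(t) ≤ 0 before t₀ and ≥ 0 after t₀. -/
theorem rss_relative_velocity_sign_change (v_r v_f ρ a_max a_min a_max_brake : ℝ)
    (hamax : 0 ≤ a_max) (hamin : 0 < a_min) (hmm : a_min < a_max_brake)
    (hvr : 0 ≤ v_r) (hvf : 0 ≤ v_f) (hρ : 0 ≤ ρ) :
    let vR : ℝ → ℝ := fun t =>
      if t ≤ ρ then v_r + a_max * t else max 0 (v_r + a_max * ρ - a_min * (t - ρ))
    let vF : ℝ → ℝ := fun t => max 0 (v_f - a_max_brake * t)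
    ∃ t₀ : ℝ, 0 ≤ t₀ ∧
      (∀ t : ℝ, 0 ≤ t → t < t₀ → vR t - vF t ≤ 0) ∧
      (∀ t : ℝ, t₀ < t → 0 ≤ vR t - vF t) := by
  intro vR vF
  have hb : 0 < a_max_brake := hamin.trans hmm
  have hvRnn : ∀ t, 0 ≤ t → 0 ≤ vR t := by
    intro t ht
    simp only [vR]
    split
    · positivity
    · exact le_max_left _ _
  have persist : ∀ s t, 0 ≤ s → s ≤ t → vF s ≤ vR s → vF t ≤ vR t := by
    intro s t hs hst h
    have hvRt := hvRnn t (hs.trans hst)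
    simp only [vR, vF] at h ⊢
    rcases le_or_gt (v_f - a_max_brake * t) 0 with hft | hft
    · rw [max_eq_left hft]
      simpa only [vR] using hvRt
    · rw [max_eq_right hft.le]
      have hfs : 0 < v_f - a_max_brake * s := by nlinarith
      rw [max_eq_right hfs.le] at h
      rcases le_or_gt t ρ with htρ | htρ
      · rw [if_pos (hst.trans htρ)] at h
        rw [if_pos htρ]
        nlinarith
      · rw [if_neg (not_le.2 htρ)]
        refine le_trans ?_ (le_max_right _ _)
        rcases le_or_gt s ρ with hsρ | hsρ
        · rw [if_pos hsρ] at h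
          nlinarith
        · rw [if_neg (not_le.2 hsρ)] at h
          have hLs : v_f - a_max_brake * s ≤ v_r + a_max * ρ - a_min * (s - ρ) := by
            rcases le_max_iff.mp h with h0 | h0
            · linarith
            · exact h0
          nlinarith
  set S : Set ℝ := {t | 0 ≤ t ∧ vF t ≤ vR t} with hS
  have hTmem : (v_f / a_max_brake) ∈ S := by
    have hT : 0 ≤ v_f / a_max_brake := div_nonneg hvf hb.le
    refine ⟨hT, ?_⟩
    have : vF (v_f / a_max_brake) = 0 := by
      simp only [vF]
      rw [max_eq_left]
      rw [mul_div_cancel₀ _ hb.ne']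
      simp
    rw [this]
    exact hvRnn _ hT
  have hne : S.Nonempty := ⟨_, hTmem⟩
  have hbdd : BddBelow S := ⟨0, fun x hx => hx.1⟩
  refine ⟨sInf S, le_csInf hne fun x hx => hx.1, ?_, ?_⟩
  · intro t ht htlt
    by_contra hcon
    push_neg at hcon
    have : t ∈ S := ⟨ht, by linarith⟩
    exact absurd (csInf_le hbdd this) (not_le.2 htlt)
  · intro t ht
    obtain ⟨s, hsS, hst⟩ := exists_lt_of_csInf_lt hne ht
    have := persist s t hsS.1 hst.le hsS.2
    linarith
end

section
/- Let the rear vehicle's position during an execution of the proper response be x_r(t) = x_r + v_r·t + (a_max/2)·t² for t ∈ [0, ρ], and the front vehicle's position be x_f(t) = x_f + v_f·t − (a_max_brake/2)·t² for t ≤ v_f/a_max_brake (constant afterwards). Among all rear-vehicle behaviors with acceleration bounded by a_max during [0, ρ] and all front-vehicle behaviors with deceleration bounded by a_max_brake, the choice of maximal acceleration a_max for the rear vehicle and maximal braking a_max_brake for the front vehicle minimizes the inter-vehicle distance x_f(t) − x_r(t) at every time t. -/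
open intervalIntegral in
/-- Worst-case behaviors in the RSS proof: among rear-vehicle velocities u with
u(0) = v_r and u' ≤ a_max on [0, ρ], and front-vehicle velocities w with w(0) = v_f,
w ≥ 0 and w' ≥ −a_max_brake, the choice u*(s) = v_r + a_max·s,
w*(s) = max(0, v_f − a_max_brake·s) minimizes the inter-vehicle distance
x_f(t) − x_r(t) at every time t ∈ [0, ρ]. -/
theorem rss_worst_case_behaviors
    (x_r x_f v_r v_f ρ a_max a_max_brake : ℝ)
    (hvr : 0 ≤ v_r) (hvf : 0 ≤ v_f) (hρ : 0 ≤ ρ) (hamax : 0 ≤ a_max)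
    (hamb : 0 < a_max_brake)
    (u w du dw : ℝ → ℝ)
    (hu0 : u 0 = v_r) (hw0 : w 0 = v_f)
    (hu' : ∀ s ∈ Set.Icc 0 ρ, HasDerivAt u (du s) s)
    (hdu : ∀ s ∈ Set.Icc 0 ρ, du s ≤ a_max)
    (hw' : ∀ s : ℝ, 0 ≤ s → HasDerivAt w (dw s) s)
    (hdw : ∀ s : ℝ, 0 ≤ s → -a_max_brake ≤ dw s)
    (hwpos : ∀ s : ℝ, 0 ≤ s → 0 ≤ w s) :
    ∀ t ∈ Set.Icc (0 : ℝ) ρ,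
      (x_f + ∫ s in (0 : ℝ)..t, max 0 (v_f - a_max_brake * s))
        - (x_r + ∫ s in (0 : ℝ)..t, (v_r + a_max * s))
      ≤ (x_f + ∫ s in (0 : ℝ)..t, w s) - (x_r + ∫ s in (0 : ℝ)..t, u s) := by
  intro t ht
  obtain ⟨ht0, htρ⟩ := ht
  -- continuity of u on [0, ρ] and of w on [0, ∞)
  have hucont : ContinuousOn u (Set.Icc 0 ρ) := fun x hx =>
    (hu' x hx).continuousAt.continuousWithinAt
  have hwcont : ContinuousOn w (Set.Ici 0) := fun x hx =>
    (hw' x hx).continuousAt.continuousWithinAt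
  -- rear vehicle: u s ≤ v_r + a_max * s on [0, t]
  have hu_le : ∀ s ∈ Set.Icc (0:ℝ) t, u s ≤ v_r + a_max * s := by
    intro s hs
    have hsρ : s ∈ Set.Icc (0:ℝ) ρ := ⟨hs.1, hs.2.trans htρ⟩
    have hmono : MonotoneOn (fun s => v_r + a_max * s - u s) (Set.Icc 0 ρ) := by
      apply monotoneOn_of_deriv_nonneg (convex_Icc 0 ρ)
      · exact ((continuous_const.add (continuous_const.mul continuous_id)).continuousOn).sub hucont
      · intro x hx
        rw [interior_Icc] at hx
        have hx' : x ∈ Set.Icc (0:ℝ) ρ := Set.Ioo_subset_Icc_self hx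
        exact (((hasDerivAt_const x v_r).add
          ((hasDerivAt_id x).const_mul a_max)).sub (hu' x hx')).differentiableAt.differentiableWithinAt
      · intro x hx
        rw [interior_Icc] at hx
        have hx' : x ∈ Set.Icc (0:ℝ) ρ := Set.Ioo_subset_Icc_self hx
        have hd : HasDerivAt (fun s => v_r + a_max * s - u s) (0 + a_max * 1 - du x) x :=
          ((hasDerivAt_const x v_r).add ((hasDerivAt_id x).const_mul a_max)).sub (hu' x hx')
        rw [hd.deriv]
        have := hdu x hx'
        linarith
    have h0 : (0:ℝ) ∈ Set.Icc (0:ℝ) ρ := ⟨le_refl 0, hρ⟩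
    have := hmono h0 hsρ hs.1
    simp [hu0] at this
    linarith
  -- front vehicle: max 0 (v_f - a_max_brake * s) ≤ w s on [0, ∞)
  have hw_ge : ∀ s : ℝ, 0 ≤ s → max 0 (v_f - a_max_brake * s) ≤ w s := by
    intro s hs
    refine max_le (hwpos s hs) ?_
    have hmono : MonotoneOn (fun s => w s - (v_f - a_max_brake * s)) (Set.Ici 0) := by
      apply monotoneOn_of_deriv_nonneg (convex_Ici 0)
      · exact hwcont.sub ((continuous_const.sub (continuous_const.mul continuous_id)).continuousOn)
      · intro x hx
        rw [interior_Ici] at hx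
        exact ((hw' x hx.le).sub ((hasDerivAt_const x v_f).sub
          ((hasDerivAt_id x).const_mul a_max_brake))).differentiableAt.differentiableWithinAt
      · intro x hx
        rw [interior_Ici] at hx
        have hd : HasDerivAt (fun s => w s - (v_f - a_max_brake * s)) (dw x - (0 - a_max_brake * 1)) x :=
          (hw' x hx.le).sub ((hasDerivAt_const x v_f).sub ((hasDerivAt_id x).const_mul a_max_brake))
        rw [hd.deriv]
        have := hdw x hx.le
        linarith
    have := hmono (Set.self_mem_Ici) (Set.mem_Ici.mpr hs) hs
    simp [hw0] at this
    linarith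
  -- integrability
  have hIcc : Set.uIcc (0:ℝ) t = Set.Icc 0 t := Set.uIcc_of_le ht0
  have hiu : IntervalIntegrable u MeasureTheory.volume 0 t := by
    apply ContinuousOn.intervalIntegrable
    rw [hIcc]
    exact hucont.mono (Set.Icc_subset_Icc le_rfl htρ)
  have hiw : IntervalIntegrable w MeasureTheory.volume 0 t := by
    apply ContinuousOn.intervalIntegrable
    rw [hIcc]
    exact hwcont.mono (fun x hx => hx.1)
  have hiu' : IntervalIntegrable (fun s => v_r + a_max * s) MeasureTheory.volume 0 t :=
    (continuous_const.add (continuous_const.mul continuous_id)).intervalIntegrable 0 t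
  have hiw' : IntervalIntegrable (fun s => max 0 (v_f - a_max_brake * s)) MeasureTheory.volume 0 t :=
    (continuous_const.max (continuous_const.sub (continuous_const.mul continuous_id))).intervalIntegrable 0 t
  have h1 : (∫ s in (0:ℝ)..t, max 0 (v_f - a_max_brake * s)) ≤ ∫ s in (0:ℝ)..t, w s := by
    apply intervalIntegral.integral_mono_on ht0 hiw' hiw
    exact fun s hs => hw_ge s hs.1
  have h2 : (∫ s in (0:ℝ)..t, u s) ≤ ∫ s in (0:ℝ)..t, (v_r + a_max * s) := by
    apply intervalIntegral.integral_mono_on ht0 hiu hiu'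
    exact fun s hs => hu_le s hs
  linarith
end

section
/- Let D(t) = x_f(t) − x_r(t) where x_r(t) is the position of the SV executing the proper response (accelerate at a_max on [0, ρ], then brake at a_min until halt, then stay still) and x_f(t) is the POV position (brake at a_max_brake until halt, then stay still), with v_r, v_f ≥ 0, ρ ≥ 0, a_max ≥ 0, 0 < a_min < a_max_brake. Then the minimum of D over [0, ∞) is attained either at t = 0 or at the SV's halting time. -/
open intervalIntegral in
/-- The minimum over [0, ∞) of the inter-vehicle distance D(t) = x_f(t) − x_r(t),
where the SV executes the proper response (accelerate at a_max on [0, ρ], then brake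
at a_min until halt) and the POV brakes at a_max_brake until halt, is attained either
at t = 0 or at the SV's halting time ρ + (v_r + a_max·ρ)/a_min. -/
theorem rss_distance_min_at_endpoints
    (x_r x_f v_r v_f ρ a_max a_min a_max_brake : ℝ)
    (hvr : 0 ≤ v_r) (hvf : 0 ≤ v_f) (hρ : 0 ≤ ρ) (hamax : 0 ≤ a_max)
    (hamin : 0 < a_min) (hmm : a_min < a_max_brake) :
    let u : ℝ → ℝ := fun s =>
      if s ≤ ρ then v_r + a_max * s else max 0 (v_r + a_max * ρ - a_min * (s - ρ))
    let wf : ℝ → ℝ := fun s => max 0 (v_f - a_max_brake * s)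
    let D : ℝ → ℝ := fun t =>
      (x_f + ∫ s in (0 : ℝ)..t, wf s) - (x_r + ∫ s in (0 : ℝ)..t, u s)
    let Thalt := ρ + (v_r + a_max * ρ) / a_min
    ∀ t : ℝ, 0 ≤ t → min (D 0) (D Thalt) ≤ D t := by
  intro u wf D Thalt t ht
  have hb : (0:ℝ) < a_max_brake := hamin.trans hmm
  have hc : (0:ℝ) ≤ v_r + a_max * ρ := by positivity
  have hdiv : (0:ℝ) ≤ (v_r + a_max * ρ) / a_min := div_nonneg hc hamin.le
  have hTρ : ρ ≤ Thalt := by simp only [Thalt]; linarith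
  have hT0 : (0:ℝ) ≤ Thalt := le_trans hρ hTρ
  -- continuity
  have hu_cont : Continuous u := by
    apply Continuous.if_le (by continuity) (continuous_const.max (by continuity))
      continuous_id continuous_const
    intro x hx
    simp only [id_eq] at hx
    subst hx
    simp [max_eq_right hc]
  have hwf_cont : Continuous wf := continuous_const.max (by continuity)
  have hu_int : ∀ a b : ℝ, IntervalIntegrable u MeasureTheory.volume a b :=
    fun a b => hu_cont.intervalIntegrable a b
  have hwf_int : ∀ a b : ℝ, IntervalIntegrable wf MeasureTheory.volume a b :=
    fun a b => hwf_cont.intervalIntegrable a b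
  -- nonnegativity
  have hwf_nonneg : ∀ s : ℝ, 0 ≤ wf s := fun s => le_max_left _ _
  -- u vanishes past Thalt
  have hu_zero : ∀ s : ℝ, Thalt ≤ s → u s = 0 := by
    intro s hs
    by_cases h : s ≤ ρ
    · have hsρ : s = ρ := le_antisymm h (le_trans hTρ hs)
      have h1 : (v_r + a_max * ρ) / a_min ≤ 0 := by
        have := hs; simp only [Thalt] at this; linarith [hsρ ▸ this]
      have h2 : v_r + a_max * ρ = 0 := by
        have := div_nonpos_iff.mp h1
        rcases this with ⟨h3, _⟩ | ⟨h3, h4⟩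
        · linarith
        · linarith
      simp only [u, hsρ, if_pos le_rfl]
      linarith
    · simp only [u, if_neg h]
      have hmul : a_min * ((v_r + a_max * ρ) / a_min) = v_r + a_max * ρ := by
        field_simp
      have hsT : Thalt ≤ s := hs
      simp only [Thalt] at hsT
      have : v_r + a_max * ρ - a_min * (s - ρ) ≤ 0 := by nlinarith
      exact max_eq_left this
  -- persistence of (wf ≤ u) within [0, ρ]
  have keyA : ∀ s0 s : ℝ, 0 ≤ s0 → s0 ≤ s → s ≤ ρ → wf s0 ≤ u s0 → wf s ≤ u s := by
    intro s0 s hs0 hss hsρ h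
    have hs0ρ : s0 ≤ ρ := le_trans hss hsρ
    simp only [u, if_pos hsρ, if_pos hs0ρ] at *
    have h1 : wf s ≤ wf s0 := by
      apply max_le (le_max_left _ _)
      have : v_f - a_max_brake * s ≤ v_f - a_max_brake * s0 := by nlinarith
      exact le_trans this (le_max_right _ _)
    have h2 : v_r + a_max * s0 ≤ v_r + a_max * s := by nlinarith
    linarith
  -- persistence of (wf ≤ u) past ρ
  have keyB : ∀ s0 s : ℝ, ρ ≤ s0 → s0 ≤ s → wf s0 ≤ u s0 → wf s ≤ u s := by
    intro s0 s hρs0 hss h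
    have hus0 : u s0 = max 0 (v_r + a_max * ρ - a_min * (s0 - ρ)) := by
      simp only [u]
      split_ifs with h'
      · have : s0 = ρ := le_antisymm h' hρs0
        subst this
        simp [max_eq_right hc]
      · rfl
    have hus : u s = max 0 (v_r + a_max * ρ - a_min * (s - ρ)) := by
      simp only [u]
      split_ifs with h'
      · have : s = ρ := le_antisymm h' (le_trans hρs0 hss)
        subst this
        simp [max_eq_right hc]
      · rfl
    rw [hus0] at h
    rw [hus]
    apply max_le (le_max_left _ _)
    by_cases hcase : v_r + a_max * ρ - a_min * (s0 - ρ) ≤ 0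
    · -- then wf s0 = 0, so v_f - b*s0 ≤ 0, hence v_f - b*s ≤ 0
      have h0 : max 0 (v_r + a_max * ρ - a_min * (s0 - ρ)) = 0 := max_eq_left hcase
      rw [h0] at h
      have h1 : v_f - a_max_brake * s0 ≤ 0 := le_trans (le_max_right _ _) h
      have : v_f - a_max_brake * s ≤ 0 := by nlinarith
      exact le_trans this (le_max_left _ _)
    · push_neg at hcase
      have h0 : max 0 (v_r + a_max * ρ - a_min * (s0 - ρ)) =
          v_r + a_max * ρ - a_min * (s0 - ρ) := max_eq_right hcase.le
      rw [h0] at h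
      have h1 : v_f - a_max_brake * s0 ≤ v_r + a_max * ρ - a_min * (s0 - ρ) :=
        le_trans (le_max_right _ _) h
      have h2 : v_f - a_max_brake * s ≤ v_r + a_max * ρ - a_min * (s - ρ) := by nlinarith
      exact le_trans h2 (le_max_right _ _)
  have key : ∀ s0 s : ℝ, 0 ≤ s0 → s0 ≤ s → wf s0 ≤ u s0 → wf s ≤ u s := by
    intro s0 s hs0 hss h
    by_cases hsρ : s ≤ ρ
    · exact keyA s0 s hs0 hss hsρ h
    · push_neg at hsρ
      by_cases hs0ρ : ρ ≤ s0
      · exact keyB s0 s hs0ρ hss h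
      · push_neg at hs0ρ
        have hρ' : wf ρ ≤ u ρ := keyA s0 ρ hs0 hs0ρ.le le_rfl h
        exact keyB ρ s le_rfl hsρ.le hρ'
  -- now the main argument
  rcases le_or_gt t Thalt with hcase | hcase
  · by_cases hex : ∃ s0, s0 ∈ Set.Icc (0:ℝ) t ∧ wf s0 ≤ u s0
    · obtain ⟨s0, ⟨hs00, hs0t⟩, hle⟩ := hex
      -- D Thalt ≤ D t
      have hint : ∫ s in t..Thalt, wf s ≤ ∫ s in t..Thalt, u s := by
        apply intervalIntegral.integral_mono_on hcase (hwf_int t Thalt) (hu_int t Thalt)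
        intro s hs
        exact key s0 s hs00 (le_trans hs0t hs.1) hle
      have hsplitw : (∫ s in (0:ℝ)..t, wf s) + ∫ s in t..Thalt, wf s
          = ∫ s in (0:ℝ)..Thalt, wf s :=
        intervalIntegral.integral_add_adjacent_intervals (hwf_int 0 t) (hwf_int t Thalt)
      have hsplitu : (∫ s in (0:ℝ)..t, u s) + ∫ s in t..Thalt, u s
          = ∫ s in (0:ℝ)..Thalt, u s :=
        intervalIntegral.integral_add_adjacent_intervals (hu_int 0 t) (hu_int t Thalt)
      have : D Thalt ≤ D t := by
        simp only [D]
        linarith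
      exact le_trans (min_le_right _ _) this
    · push_neg at hex
      have hint : ∫ s in (0:ℝ)..t, u s ≤ ∫ s in (0:ℝ)..t, wf s := by
        apply intervalIntegral.integral_mono_on ht (hu_int 0 t) (hwf_int 0 t)
        intro s hs
        exact (hex s hs).le
      have : D 0 ≤ D t := by
        simp only [D, intervalIntegral.integral_same]
        linarith
      exact le_trans (min_le_left _ _) this
  · -- t > Thalt : D Thalt ≤ D t
    have hu0 : ∫ s in Thalt..t, u s = 0 := by
      rw [intervalIntegral.integral_congr (g := fun _ => (0:ℝ))]
      · simp
      · intro s hs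
        rw [Set.uIcc_of_le hcase.le] at hs
        exact hu_zero s hs.1
    have hwf0 : 0 ≤ ∫ s in Thalt..t, wf s :=
      intervalIntegral.integral_nonneg hcase.le (fun s _ => hwf_nonneg s)
    have hsplitw : (∫ s in (0:ℝ)..Thalt, wf s) + ∫ s in Thalt..t, wf s
        = ∫ s in (0:ℝ)..t, wf s :=
      intervalIntegral.integral_add_adjacent_intervals (hwf_int 0 Thalt) (hwf_int Thalt t)
    have hsplitu : (∫ s in (0:ℝ)..Thalt, u s) + ∫ s in Thalt..t, u s
        = ∫ s in (0:ℝ)..t, u s :=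
      intervalIntegral.integral_add_adjacent_intervals (hu_int 0 Thalt) (hu_int Thalt t)
    have : D Thalt ≤ D t := by
      simp only [D]
      linarith
    exact le_trans (min_le_right _ _) this
end
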